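/- Let x^t ∈ {0,1}^n, Q : {0,1}^n → ℝ a function, and U ∈ ℝ such that Q(x) ≤ U for all binary x. Define c(x) as in the integer L-shaped cut: c(x) = (Q(x^t) − U)·(∑_{i: x^t_i=1} x_i − ∑_{i: x^t_i=0} x_i − |{i : x^t_i=1}| + 1) + U. Then for every binary x, Q(x) ≤ c(x); i.e., the cut is valid: it never cuts off the true recourse value at any binary point. -/

import Mathlib

/-!
On binary vectors the linear form `∑_{xᵗᵢ = 1} xᵢ - ∑_{xᵗᵢ = 0} xᵢ - |{i | xᵗᵢ = 1}| + 1` equals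
`1 - d(x, xᵗ)`, where `d` is the Hamming distance. Hence the cut is `(Q(xᵗ) - U)(1 - d) + U`:
at `x = xᵗ` it is exactly `Q(xᵗ)`, and at every other binary point `1 - d ≤ 0` and `Q(xᵗ) ≤ U`,
so it is at least `U ≥ Q(x)`.
-/

open Finset

lemma ite_sub_ite_eq_of_binary {a b : ℤ} (ha : a = 0 ∨ a = 1) (hb : b = 0 ∨ b = 1) :
    ((if b = 1 then a else 0) - if b = 0 then a else 0) =
      (if b = 1 then 1 else 0) - if a ≠ b then 1 else 0 := by
  rcases ha with rfl | rfl <;> rcases hb with rfl | rfl <;> decide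

lemma sum_filter_eq_one_sub_sum_filter_eq_zero {ι : Type*} [Fintype ι] {x y : ι → ℤ}
    (hx : ∀ i, x i = 0 ∨ x i = 1) (hy : ∀ i, y i = 0 ∨ y i = 1) :
    ∑ i ∈ univ.filter (fun i => y i = 1), x i - ∑ i ∈ univ.filter (fun i => y i = 0), x i =
      #(univ.filter (fun i => y i = 1)) - hammingDist x y := by
  simp only [sum_filter, card_filter, hammingDist, ← sum_sub_distrib]
  push_cast
  rw [← sum_sub_distrib]
  exact sum_congr rfl fun i _ => ite_sub_ite_eq_of_binary (hx i) (hy i)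

lemma le_sub_mul_one_sub_add {p q u : ℝ} {d : ℕ} (hq : q ≤ u) (hp : p ≤ u)
    (hd : d = 0 → p = q) : p ≤ (q - u) * (1 - d) + u := by
  rcases Nat.eq_zero_or_pos d with rfl | hpos
  · simp [hd rfl]
  · have : (1 : ℝ) ≤ d := by exact_mod_cast hpos
    nlinarith

theorem stmt_3 (n : ℕ) (xt : Fin n → ℤ) (hxt : ∀ i, xt i = 0 ∨ xt i = 1)
    (Q : (Fin n → ℤ) → ℝ) (U : ℝ)
    (hU : ∀ x : Fin n → ℤ, (∀ i, x i = 0 ∨ x i = 1) → Q x ≤ U)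
    (c : (Fin n → ℤ) → ℝ)
    (hc : ∀ x, c x =
      (Q xt - U) * ((((∑ i ∈ Finset.univ.filter (fun i => xt i = 1), x i) -
        (∑ i ∈ Finset.univ.filter (fun i => xt i = 0), x i) : ℤ) : ℝ)
        - ((Finset.univ.filter (fun i => xt i = 1)).card : ℝ) + 1) + U) :
    ∀ x : Fin n → ℤ, (∀ i, x i = 0 ∨ x i = 1) → Q x ≤ c x := by
  intro x hx
  have hcut : c x = (Q xt - U) * (1 - hammingDist x xt) + U := by
    rw [hc, sum_filter_eq_one_sub_sum_filter_eq_zero hx hxt]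
    push_cast
    ring
  rw [hcut]
  exact le_sub_mul_one_sub_add (hU xt hxt) (hU x hx)
    fun hd => by rw [hammingDist_eq_zero.mp hd]
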